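/- arXiv:1806.06317 — 5 statements merged into one kernel-verified Lean document; each statement's English description precedes it below -/
import Mathlib

section
/- Let σ > 0 and m ∈ ℕ, m ≥ 1, and let z_1, …, z_m be the m-th roots of unity. Set α = (2σ + 1 − √(4σ+1))/(2σ), so that 0 < α < 1. Then β_m := (1/m) Σ_{j=1}^m 1/(1 + 2σ − σz_j − σ\bar{z_j}) = (1 + α^m)/((1 − α^m)·√(4σ+1)). Consequently β_m → 1/√(1 + 4σ) as m → ∞. -/
/-!
On the unit circle `z̄ = z⁻¹`, and `1 + 2σ = σ (α + α⁻¹)`, so the summand is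
`σ⁻¹ (α + α⁻¹ - z - z⁻¹)⁻¹`, which splits into partial fractions as
`(α/(α - z) - α⁻¹/(α⁻¹ - z)) / (α - α⁻¹)`. Summing `x/(x - z)` over the `m`-th roots of unity
gives `x` times the logarithmic derivative of `X^m - 1`, i.e. `m xᵐ/(xᵐ - 1)`; evaluating at `α`
and `α⁻¹` yields the closed formula, and `αᵐ → 0` gives the limit.
-/

open Complex Filter

open Finset Polynomial in
theorem IsPrimitiveRoot.sum_div_sub_pow {K : Type*} [Field K] {ζ : K} {m : ℕ}
    (hζ : IsPrimitiveRoot ζ m) {x : K} (hx : x ^ m ≠ 1) :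
    ∑ j ∈ range m, x / (x - ζ ^ j) = m * x ^ m / (x ^ m - 1) := by
  obtain _ | m := m
  · simp
  have hroots : (X ^ (m + 1) - C (1 : K)).roots = (range (m + 1)).val.map (ζ ^ · * 1) :=
    hζ.nthRoots_eq (one_pow _)
  have hlogDeriv := (X_pow_sub_one_splits hζ).eval_derivative_div_eval_of_ne_zero
    (x := x) (by simpa [sub_eq_zero] using hx)
  simp only [hroots, Multiset.map_map, Function.comp_def, mul_one, ← sum_eq_multiset_sum,
    derivative_sub, derivative_X_pow, derivative_C, sub_zero, eval_mul, eval_C, eval_pow,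
    eval_X, eval_sub, add_tsub_cancel_right] at hlogDeriv
  simp_rw [div_eq_mul_one_div x, ← mul_sum, ← hlogDeriv]
  ring

theorem inv_add_sub_sub_inv_of_mul_eq_one {K : Type*} [Field K] {a b z : K} (hab : a * b = 1)
    (hz : z ≠ 0) (haz : a ≠ z) (hbz : b ≠ z) (hab' : a ≠ b) :
    (a + b - z - z⁻¹)⁻¹ = (a / (a - z) - b / (b - z)) / (a - b) := by
  have hfactor : a + b - z - z⁻¹ = -((a - z) * (b - z) / z) := by
    field_simp; linear_combination hab
  rw [hfactor, div_sub_div _ _ (sub_ne_zero.mpr haz) (sub_ne_zero.mpr hbz)]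
  have hab_sub : a - b ≠ 0 := sub_ne_zero.mpr hab'
  field_simp
  ring

open Finset in
theorem IsPrimitiveRoot.sum_inv_add_inv_sub_pow_sub_inv {K : Type*} [Field K] {ζ : K} {m : ℕ}
    (hζ : IsPrimitiveRoot ζ m) {a : K} (ha : a ≠ 0) (ha2 : a ^ 2 ≠ 1) (ham : a ^ m ≠ 1) :
    ∑ j ∈ range m, (a + a⁻¹ - ζ ^ j - (ζ ^ j)⁻¹)⁻¹
      = m * (a ^ m + 1) / ((a - a⁻¹) * (a ^ m - 1)) := by
  have hm : m ≠ 0 := by rintro rfl; exact ham (pow_zero a)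
  have ham' : a⁻¹ ^ m ≠ 1 := by rwa [inv_pow, inv_ne_one]
  have hroot : ∀ j, (ζ ^ j) ^ m = 1 := fun j => by
    rw [← pow_mul, mul_comm, pow_mul, hζ.pow_eq_one, one_pow]
  have ha_ne_inv : a ≠ a⁻¹ := fun h => ha2 (by rw [sq, ← mul_inv_cancel₀ ha, ← h])
  have hterm : ∀ j ∈ range m, (a + a⁻¹ - ζ ^ j - (ζ ^ j)⁻¹)⁻¹
      = (a / (a - ζ ^ j) - a⁻¹ / (a⁻¹ - ζ ^ j)) / (a - a⁻¹) := fun j _ =>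
    inv_add_sub_sub_inv_of_mul_eq_one (mul_inv_cancel₀ ha) (pow_ne_zero j (hζ.ne_zero hm))
      (fun h => ham (h ▸ hroot j)) (fun h => ham' (h ▸ hroot j)) ha_ne_inv
  rw [sum_congr rfl hterm, ← sum_div, sum_sub_distrib, hζ.sum_div_sub_pow ham,
    hζ.sum_div_sub_pow ham']
  have h1 : a ^ m - 1 ≠ 0 := sub_ne_zero.mpr ham
  have h2 : 1 - a ^ m ≠ 0 := sub_ne_zero.mpr ham.symm
  have h3 : a - a⁻¹ ≠ 0 := sub_ne_zero.mpr ha_ne_inv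
  rw [inv_pow]
  field_simp
  ring

open Finset in
theorem sum_one_div_one_add_two_mul_sub_exp_sub_conj {m : ℕ} (hm : m ≠ 0) {σ a : ℂ}
    (hσa : σ * (a + a⁻¹) = 1 + 2 * σ) (ha : a ≠ 0) (ha2 : a ^ 2 ≠ 1) (ham : a ^ m ≠ 1) :
    ∑ j : Fin m, 1 / (1 + 2 * σ - σ * exp (2 * Real.pi * I * (j : ℕ) / m)
        - σ * (starRingEnd ℂ) (exp (2 * Real.pi * I * (j : ℕ) / m)))
      = σ⁻¹ * (m * (a ^ m + 1) / ((a - a⁻¹) * (a ^ m - 1))) := by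
  set ζ := exp (2 * Real.pi * I / m)
  have hζ : IsPrimitiveRoot ζ m := isPrimitiveRoot_exp m hm
  have hexp : ∀ j : ℕ, exp (2 * Real.pi * I * j / m) = ζ ^ j := fun j => by
    rw [← exp_nat_mul]; ring_nf
  have hconj : ∀ j : ℕ, (starRingEnd ℂ) (ζ ^ j) = (ζ ^ j)⁻¹ := fun j =>
    (inv_eq_conj (by rw [norm_pow, hζ.norm'_eq_one hm, one_pow])).symm
  simp only [hexp, hconj, ← hσa]
  rw [Fin.sum_univ_eq_sum_range (fun j => 1 / (σ * (a + a⁻¹) - σ * ζ ^ j - σ * (ζ ^ j)⁻¹)),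
    ← hζ.sum_inv_add_inv_sub_pow_sub_inv ha ha2 ham, mul_sum]
  refine sum_congr rfl fun j _ => ?_
  rw [one_div, ← mul_inv]
  ring_nf

/-- The root in `(0, 1)` of `σ t² - (2σ + 1) t + σ`. -/
noncomputable def smallRoot (σ : ℝ) : ℝ := (2 * σ + 1 - √(4 * σ + 1)) / (2 * σ)

section smallRoot

variable {σ : ℝ}

theorem sqrt_four_mul_add_one_lt (hσ : 0 < σ) : √(4 * σ + 1) < 2 * σ + 1 := by
  rw [Real.sqrt_lt' (by linarith)]; nlinarith

theorem smallRoot_pos (hσ : 0 < σ) : 0 < smallRoot σ :=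
  div_pos (by linarith [sqrt_four_mul_add_one_lt hσ]) (by linarith)

theorem smallRoot_lt_one (hσ : 0 < σ) : smallRoot σ < 1 := by
  rw [smallRoot, div_lt_one (by linarith)]
  linarith [(Real.lt_sqrt zero_le_one).mpr (show 1 ^ 2 < 4 * σ + 1 by linarith)]

theorem smallRoot_inv (hσ : 0 < σ) :
    (smallRoot σ)⁻¹ = (2 * σ + 1 + √(4 * σ + 1)) / (2 * σ) := by
  have hs := Real.sq_sqrt (show 0 ≤ 4 * σ + 1 by linarith)
  rw [smallRoot, inv_div, div_eq_div_iff (by linarith [sqrt_four_mul_add_one_lt hσ]) (by linarith)]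
  nlinarith

theorem mul_smallRoot_add_inv (hσ : 0 < σ) :
    σ * (smallRoot σ + (smallRoot σ)⁻¹) = 1 + 2 * σ := by
  rw [smallRoot_inv hσ, smallRoot]; field_simp; ring

theorem mul_smallRoot_sub_inv (hσ : 0 < σ) :
    σ * (smallRoot σ - (smallRoot σ)⁻¹) = -√(4 * σ + 1) := by
  rw [smallRoot_inv hσ, smallRoot]; field_simp; ring

end smallRoot

theorem average_one_div_one_add_two_mul_sub_exp_sub_conj {σ : ℝ} (hσ : 0 < σ) {m : ℕ}
    (hm : m ≠ 0) :
    (1 / (m : ℂ)) * ∑ j : Fin m, 1 / (1 + 2 * (σ : ℂ) - σ * exp (2 * Real.pi * I * (j : ℕ) / m)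
        - σ * (starRingEnd ℂ) (exp (2 * Real.pi * I * (j : ℕ) / m)))
      = (((1 + smallRoot σ ^ m) / ((1 - smallRoot σ ^ m) * √(4 * σ + 1)) : ℝ) : ℂ) := by
  set α := smallRoot σ
  have hα0 : 0 < α := smallRoot_pos hσ
  have hαm : α ^ m < 1 := pow_lt_one₀ hα0.le (smallRoot_lt_one hσ) hm
  have hα2 : (α : ℂ) ^ 2 ≠ 1 := by
    exact_mod_cast (pow_lt_one₀ hα0.le (smallRoot_lt_one hσ) two_ne_zero).ne
  have hαm' : (α : ℂ) ^ m ≠ 1 := by exact_mod_cast hαm.ne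
  have hadd : (σ : ℂ) * (α + (α : ℂ)⁻¹) = 1 + 2 * σ := by
    exact_mod_cast mul_smallRoot_add_inv hσ
  have hsub : (α : ℂ) - (α : ℂ)⁻¹ = -√(4 * σ + 1) / σ := by
    rw [eq_div_iff (by exact_mod_cast hσ.ne'), mul_comm]
    exact_mod_cast mul_smallRoot_sub_inv hσ
  rw [sum_one_div_one_add_two_mul_sub_exp_sub_conj hm hadd (by exact_mod_cast hα0.ne') hα2
    hαm', hsub]
  have hs : (√(4 * σ + 1) : ℂ) ≠ 0 := by
    exact_mod_cast (Real.sqrt_pos.mpr (by linarith)).ne'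
  have h1 : (α : ℂ) ^ m - 1 ≠ 0 := sub_ne_zero.mpr hαm'
  have h2 : 1 - (α : ℂ) ^ m ≠ 0 := sub_ne_zero.mpr hαm'.symm
  have hσ' : (σ : ℂ) ≠ 0 := by exact_mod_cast hσ.ne'
  have hm' : (m : ℂ) ≠ 0 := by exact_mod_cast hm
  push_cast
  field_simp
  ring

theorem tendsto_one_add_pow_div_one_sub_pow_mul {α : ℝ} (hα : |α| < 1) (c : ℝ) :
    Tendsto (fun m : ℕ => (1 + α ^ m) / ((1 - α ^ m) * c)) atTop (nhds (1 / c)) := by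
  have hpow := tendsto_pow_atTop_nhds_zero_of_abs_lt_one hα
  have hnum : Tendsto (fun m : ℕ => 1 + α ^ m) atTop (nhds 1) := by
    simpa using hpow.const_add 1
  have hden : Tendsto (fun m : ℕ => 1 - α ^ m) atTop (nhds 1) := by
    simpa using hpow.const_sub 1
  simpa [div_div] using (hnum.div hden one_ne_zero).div_const c

/-- Closed formula for `β_m = (1/m) Σ_{j=1}^m 1/(1 + 2σ - σ z_j - σ conj z_j)` where the
`z_j` are the `m`-th roots of unity: with `α = (2σ+1-√(4σ+1))/(2σ)` one has `0 < α < 1`,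
`β_m = (1+αᵐ)/((1-αᵐ)√(4σ+1))`, and `β_m → 1/√(1+4σ)` as `m → ∞`. -/
theorem stmt2 (σ : ℝ) (hσ : 0 < σ) (α : ℝ)
    (hα : α = (2 * σ + 1 - Real.sqrt (4 * σ + 1)) / (2 * σ))
    (β : ℕ → ℝ)
    (hβ : ∀ m : ℕ, 1 ≤ m → (β m : ℂ) = (1 / (m : ℂ)) * ∑ j : Fin m,
      1 / (1 + 2 * (σ : ℂ) - (σ : ℂ) * Complex.exp (2 * Real.pi * Complex.I * (j : ℕ) / m)
            - (σ : ℂ) * (starRingEnd ℂ) (Complex.exp (2 * Real.pi * Complex.I * (j : ℕ) / m)))) :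
    0 < α ∧ α < 1 ∧
    (∀ m : ℕ, 1 ≤ m → β m = (1 + α ^ m) / ((1 - α ^ m) * Real.sqrt (4 * σ + 1))) ∧
    Tendsto β atTop (nhds (1 / Real.sqrt (1 + 4 * σ))) := by
  obtain rfl : α = smallRoot σ := hα
  have formula : ∀ m : ℕ, 1 ≤ m →
      β m = (1 + smallRoot σ ^ m) / ((1 - smallRoot σ ^ m) * √(4 * σ + 1)) := fun m hm => by
    exact_mod_cast
      (hβ m hm).trans (average_one_div_one_add_two_mul_sub_exp_sub_conj hσ (by omega))
  refine ⟨smallRoot_pos hσ, smallRoot_lt_one hσ, formula, ?_⟩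
  have habs : |smallRoot σ| < 1 := by
    rw [abs_of_pos (smallRoot_pos hσ)]; exact smallRoot_lt_one hσ
  rw [add_comm 1 (4 * σ)]
  refine (tendsto_one_add_pow_div_one_sub_pow_mul habs _).congr' ?_
  filter_upwards [eventually_ge_atTop 1] with m hm using (formula m hm).symm
end

section
/- Let m ≥ 2n+1, σ ≥ 0, n ≥ 1, and let Σ be an m×m symmetric positive definite matrix with condition number κ = λ_max(Σ)/λ_min(Σ). Then trace( (A_σ^{(n)})^{-1} Σ (A_σ^{(n)})^{-1} ) ≤ trace(Σ) · ( 1 − 1/κ + (1/(κm)) Σ_{j=0}^{m−1} 1/(1 + 4^n σ sin^{2n}(πj/m))² ). Equivalently, if n ∼ N(0, Σ) is an m-dimensional Gaussian random vector, then the sum of coordinate variances of (A_σ^{(n)})^{-1} n divided by the sum of coordinate variances of n is bounded by 1 − 1/κ + (1/(κm)) Σ_{j=0}^{m−1} (1 + 4^n σ sin^{2n}(πj/m))^{-2}. -/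
open Matrix

/-- The `m × m` periodic forward finite difference matrix `D₊`. -/
noncomputable def Dplus (m : ℕ) [NeZero m] : Matrix (Fin m) (Fin m) ℝ :=
  Matrix.of fun i j => if j = i then -1 else if j = i + 1 then 1 else 0

/-- The periodic backward finite difference matrix `D₋ = -D₊ᵀ`. -/
noncomputable def Dminus (m : ℕ) [NeZero m] : Matrix (Fin m) (Fin m) ℝ := -(Dplus m)ᵀ

/-- The periodic one-dimensional discrete Laplacian `L = D₋ D₊`. -/
noncomputable def Lap (m : ℕ) [NeZero m] : Matrix (Fin m) (Fin m) ℝ := Dminus m * Dplus m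

/-- The Laplacian smoothing matrix `A_σ = I - σ L`. -/
noncomputable def MatA (m : ℕ) [NeZero m] (σ : ℝ) : Matrix (Fin m) (Fin m) ℝ :=
  1 - σ • Lap m

/-- The `n`-th order smoothing matrix `A_σ⁽ⁿ⁾ = I + (-1)ⁿ σ Lⁿ`. -/
noncomputable def MatAn (m : ℕ) [NeZero m] (σ : ℝ) (n : ℕ) : Matrix (Fin m) (Fin m) ℝ :=
  1 + ((-1 : ℝ) ^ n * σ) • Lap m ^ n

/-!
Write `A = A_σ⁽ⁿ⁾ = 1 + σ (D₊ᵀD₊)ⁿ`. Since `D₊ᵀD₊ ⪰ 0` we get `A² ⪰ 1`, i.e. `P = A⁻² ⪯ 1`, and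
`Σ ⪰ λ_min`, so `tr((1 - P)(Σ - λ_min)) ≥ 0`, which rearranges to
`tr(A⁻¹ΣA⁻¹) = tr(PΣ) ≤ tr Σ - λ_min (m - tr P)`. The Fourier modes `k ↦ ωʲᵏ` diagonalise the
circulant matrix `A` with eigenvalues `1 + 4ⁿσ sin²ⁿ(πj/m)`, which gives `tr P` exactly, and
`tr Σ ≤ m λ_max = κ m λ_min` turns the bound into the stated one.
-/

open scoped MatrixOrder ComplexOrder

namespace Matrix

variable {ι 𝕜 : Type*} [Fintype ι] [RCLike 𝕜]

theorem PosSemidef.trace_mul_nonneg {A B : Matrix ι ι 𝕜} (hA : A.PosSemidef)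
    (hB : B.PosSemidef) : 0 ≤ (A * B).trace := by
  classical
  obtain ⟨X, rfl⟩ := CStarAlgebra.nonneg_iff_eq_star_mul_self.mp hA.nonneg
  rw [Matrix.mul_assoc, trace_mul_comm, star_eq_conjTranspose]
  exact (hB.mul_mul_conjTranspose_same X).trace_nonneg

variable [DecidableEq ι]

theorem IsHermitian.posSemidef_sub_smul_one {A : Matrix ι ι 𝕜} (hA : A.IsHermitian) {c : ℝ}
    (hc : ∀ i, c ≤ hA.eigenvalues i) : (A - (c : 𝕜) • 1).PosSemidef := by
  have hdiag : diagonal (RCLike.ofReal ∘ (hA.eigenvalues - fun _ => c)) =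
      diagonal (RCLike.ofReal ∘ hA.eigenvalues) - (c : 𝕜) • (1 : Matrix ι ι 𝕜) := by
    ext i j
    by_cases hij : i = j <;> simp [diagonal, hij, Algebra.algebraMap_eq_smul_one, sub_smul]
  have hconj : A - (c : 𝕜) • 1 = Unitary.conjStarAlgAut 𝕜 _ hA.eigenvectorUnitary
      (diagonal (RCLike.ofReal ∘ (hA.eigenvalues - fun _ => c))) := by
    rw [hdiag, map_sub, map_smul, map_one, ← hA.spectral_theorem]
  rw [hconj, Unitary.conjStarAlgAut_apply,
    Unitary.isUnit_coe.posSemidef_star_right_conjugate_iff, posSemidef_diagonal_iff]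
  intro i
  simpa using hc i

theorem IsHermitian.trace_mul_le_of_le_eigenvalues {S P : Matrix ι ι ℝ} (hS : S.IsHermitian)
    (hP : (1 - P).PosSemidef) {c : ℝ} (hc : ∀ i, c ≤ hS.eigenvalues i) :
    (P * S).trace ≤ S.trace - c * (Fintype.card ι - P.trace) := by
  have h := hP.trace_mul_nonneg (hS.posSemidef_sub_smul_one hc)
  simp only [Matrix.sub_mul, Matrix.mul_sub, Matrix.one_mul, Matrix.mul_smul, Matrix.mul_one,
    trace_sub, trace_smul, trace_one, smul_eq_mul, RCLike.ofReal_real_eq_id, id] at h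
  linarith

theorem one_sub_inv_mul_inv_posSemidef {X : Matrix ι ι 𝕜} (hX : X.PosSemidef) :
    (1 - (1 + X)⁻¹ * (1 + X)⁻¹).PosSemidef := by
  set A := 1 + X
  have hApd : A.PosDef := PosDef.one.add_posSemidef hX
  have hdet : IsUnit A.det := hApd.isUnit.map detMonoidHom
  have hAA : 2 • X + X * X = A * A - 1 := by
    simp only [A, add_mul, mul_add, one_mul, mul_one, two_nsmul]
    abel
  have hconj : 1 - A⁻¹ * A⁻¹ = A⁻¹ᴴ * (2 • X + Xᴴ * X) * A⁻¹ := by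
    rw [hApd.inv.1, hX.1, hAA, Matrix.mul_sub, Matrix.sub_mul, Matrix.mul_one,
      ← Matrix.mul_assoc, nonsing_inv_mul _ hdet, Matrix.one_mul, mul_nonsing_inv _ hdet]
  rw [hconj]
  refine PosSemidef.conjTranspose_mul_mul_same ?_ _
  exact (hX.smul (by norm_num)).add (posSemidef_conjTranspose_mul_self X)

theorem PosDef.iInf_eigenvalues_pos [Nonempty ι] {A : Matrix ι ι 𝕜} (hA : A.PosDef) :
    0 < ⨅ i, hA.1.eigenvalues i := by
  obtain ⟨i, hi⟩ := exists_eq_ciInf_of_finite (f := hA.1.eigenvalues)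
  exact (hA.eigenvalues_pos i).trans_eq hi

theorem IsHermitian.trace_le_card_mul_iSup_eigenvalues {A : Matrix ι ι ℝ} (hA : A.IsHermitian) :
    A.trace ≤ Fintype.card ι * ⨆ i, hA.eigenvalues i := by
  rw [hA.trace_eq_sum_eigenvalues]
  calc ∑ i, (hA.eigenvalues i : ℝ) ≤ ∑ _i : ι, ⨆ i, hA.eigenvalues i :=
        Finset.sum_le_sum fun i _ => le_ciSup (Set.finite_range _).bddAbove i
    _ = _ := by simp

theorem PosDef.trace_mul_le_of_posSemidef_one_sub [Nonempty ι] {S P : Matrix ι ι ℝ}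
    (hS : S.PosDef) (hP : (1 - P).PosSemidef) {κ : ℝ}
    (hκ : κ = (⨆ i, hS.1.eigenvalues i) / (⨅ i, hS.1.eigenvalues i)) :
    (P * S).trace ≤ S.trace * (1 - 1 / κ + 1 / (κ * Fintype.card ι) * P.trace) := by
  set N : ℝ := (Fintype.card ι : ℝ)
  set lmin := ⨅ i, hS.1.eigenvalues i
  set lmax := ⨆ i, hS.1.eigenvalues i
  have hmin_pos : 0 < lmin := hS.iInf_eigenvalues_pos
  have hmin_le : ∀ i, lmin ≤ hS.1.eigenvalues i := fun i =>
    ciInf_le (Set.finite_range _).bddBelow i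
  have hmax_pos : 0 < lmax := hmin_pos.trans_le ((hmin_le (Classical.arbitrary ι)).trans
    (le_ciSup (Set.finite_range _).bddAbove _))
  have hN : 0 < N := Nat.cast_pos.mpr Fintype.card_pos
  have hPN : P.trace ≤ N := by simpa [N, trace_sub] using hP.trace_nonneg
  have hratio : S.trace / (lmax * N) ≤ 1 :=
    div_le_one_of_le₀ (by linarith [hS.1.trace_le_card_mul_iSup_eigenvalues]) (by positivity)
  have hrhs : S.trace * (1 - 1 / κ + 1 / (κ * N) * P.trace) =
      S.trace - lmin * (N - P.trace) * (S.trace / (lmax * N)) := by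
    rw [hκ]; field_simp; ring
  rw [hrhs]
  nlinarith [hS.1.trace_mul_le_of_le_eigenvalues hP hmin_le,
    mul_le_mul_of_nonneg_left hratio (mul_nonneg hmin_pos.le (sub_nonneg.2 hPN))]

theorem trace_inv_mul_inv_of_mul_eq_mul_diagonal {K : Type*} [Field K] {B U : Matrix ι ι K}
    {d : ι → K} (hU : IsUnit U) (hd : ∀ i, d i ≠ 0) (hBU : B * U = U * diagonal d) :
    (B⁻¹ * B⁻¹).trace = ∑ i, (d i)⁻¹ ^ 2 := by
  have hdet : IsUnit U.det := (isUnit_iff_isUnit_det U).mp hU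
  have hdd : (fun i => d i * d⁻¹ i) = fun _ => 1 := funext fun i => mul_inv_cancel₀ (hd i)
  have hBinv : B * (U * diagonal d⁻¹ * U⁻¹) = 1 := by
    rw [← Matrix.mul_assoc, ← Matrix.mul_assoc, hBU, Matrix.mul_assoc U, diagonal_mul_diagonal,
      hdd, diagonal_one, Matrix.mul_one, mul_nonsing_inv _ hdet]
  have hsq : U * diagonal d⁻¹ * U⁻¹ * (U * diagonal d⁻¹ * U⁻¹) =
      U * diagonal (d⁻¹ ^ 2) * U⁻¹ := by
    simp only [Matrix.mul_assoc, nonsing_inv_mul_cancel_left _ _ hdet]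
    rw [← Matrix.mul_assoc (diagonal _), diagonal_mul_diagonal, sq]
    rfl
  rw [inv_eq_right_inv hBinv, hsq, trace_conj hU, trace_diagonal]
  simp

theorem map_nonsing_inv {K L : Type*} [Field K] [Field L] (f : K →+* L) (A : Matrix ι ι K) :
    A⁻¹.map f = (A.map f)⁻¹ := by
  have hadj := f.map_adjugate A
  have hdet := f.map_det A
  simp only [RingHom.mapMatrix_apply] at hadj hdet
  rw [inv_def, inv_def, ← hadj, ← hdet, Ring.inverse_eq_inv', Ring.inverse_eq_inv', ← map_inv₀]
  ext i j
  simp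

theorem pow_mulVec_of_mulVec_eq_smul {R : Type*} [CommSemiring R] {M : Matrix ι ι R}
    {v : ι → R} {c : R} (h : M *ᵥ v = c • v) (n : ℕ) : M ^ n *ᵥ v = c ^ n • v := by
  induction n with
  | zero => simp
  | succ n ih => rw [pow_succ', ← mulVec_mulVec, ih, mulVec_smul, h, smul_smul, pow_succ]

end Matrix

theorem transpose_dplus_mul_dplus_posSemidef (m : ℕ) [NeZero m] :
    ((Dplus m)ᵀ * Dplus m).PosSemidef := by
  simpa using posSemidef_conjTranspose_mul_self (Dplus m)

theorem matAn_eq_one_add (m : ℕ) [NeZero m] (σ : ℝ) (n : ℕ) :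
    MatAn m σ n = 1 + σ • ((Dplus m)ᵀ * Dplus m) ^ n := by
  have hLap : Lap m = (-1 : ℝ) • ((Dplus m)ᵀ * Dplus m) := by
    rw [Lap, Dminus, neg_mul, neg_one_smul]
  have hsign : (-1 : ℝ) ^ n * σ * (-1) ^ n = σ := by
    rw [mul_right_comm, ← mul_pow, neg_one_mul, neg_neg, one_pow, one_mul]
  rw [MatAn, hLap, smul_pow, smul_smul, hsign]

theorem one_sub_matAn_inv_mul_inv_posSemidef {m : ℕ} [NeZero m] {σ : ℝ} (hσ : 0 ≤ σ) (n : ℕ) :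
    (1 - (MatAn m σ n)⁻¹ * (MatAn m σ n)⁻¹).PosSemidef := by
  rw [matAn_eq_one_add]
  exact one_sub_inv_mul_inv_posSemidef (((transpose_dplus_mul_dplus_posSemidef m).pow n).smul hσ)

section Fourier

variable {m : ℕ} [NeZero m]

noncomputable def geomVec (z : ℂ) : Fin m → ℂ := fun k => z ^ (k : ℕ)

theorem geomVec_add_one {z : ℂ} (hz : z ^ m = 1) (k : Fin m) :
    geomVec z (k + 1) = z * geomVec z k := by
  rw [geomVec, geomVec, ← pow_succ', Fin.val_add, Fin.val_one', Nat.add_mod_mod,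
    ← pow_eq_pow_mod _ hz]

theorem geomVec_sub_one {z : ℂ} (hz : z ^ m = 1) (k : Fin m) :
    geomVec z (k - 1) = z⁻¹ * geomVec z k := by
  have hz0 : z ≠ 0 := by rintro rfl; simp [NeZero.ne m] at hz
  rw [eq_inv_mul_iff_mul_eq₀ hz0, ← geomVec_add_one hz, sub_add_cancel]

-- For `m = 1` the two branches in the definition of `Dplus` collide and `Dplus 1 = !![-1]`
-- is not a difference operator.
variable (hm : 2 ≤ m)
include hm

theorem fin_add_one_ne_self (i : Fin m) : i + 1 ≠ i := by
  intro h
  have : ((1 : Fin m) : ℕ) = 0 := by simpa using congrArg Fin.val (add_eq_left.mp h)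
  rw [Fin.val_one', Nat.mod_eq_of_lt hm] at this
  exact one_ne_zero this

theorem dplus_mulVec (v : Fin m → ℂ) :
    (Algebra.ofId ℝ ℂ).mapMatrix (Dplus m) *ᵥ v = fun i => v (i + 1) - v i := by
  have hne := fin_add_one_ne_self hm
  ext i
  have hD : ∀ j, (Algebra.ofId ℝ ℂ).mapMatrix (Dplus m) i j =
      (if i + 1 = j then 1 else 0) - (if i = j then 1 else 0) := by
    intro j
    simp only [AlgHom.mapMatrix_apply, Dplus, map_apply, of_apply, Algebra.ofId_apply,
      Complex.coe_algebraMap]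
    by_cases h1 : j = i
    · subst h1; simp [hne j]
    · by_cases h2 : j = i + 1
      · subst h2
        rw [if_neg (hne i), if_pos rfl, if_pos rfl, if_neg (hne i).symm]
        simp
      · simp [h1, h2, Ne.symm h1, Ne.symm h2]
  simp only [mulVec, dotProduct, hD, sub_mul, ite_mul, one_mul, zero_mul, Finset.sum_sub_distrib,
    Finset.sum_ite_eq, Finset.mem_univ, if_true]

theorem vecMul_dplus (v : Fin m → ℂ) :
    v ᵥ* (Algebra.ofId ℝ ℂ).mapMatrix (Dplus m) = fun i => v (i - 1) - v i := by
  have hne := fin_add_one_ne_self hm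
  ext i
  have hD : ∀ j, (Algebra.ofId ℝ ℂ).mapMatrix (Dplus m) j i =
      (if i - 1 = j then 1 else 0) - (if i = j then 1 else 0) := by
    intro j
    simp only [AlgHom.mapMatrix_apply, Dplus, map_apply, of_apply, Algebra.ofId_apply,
      Complex.coe_algebraMap]
    by_cases h1 : i = j
    · subst h1
      rw [if_pos rfl, if_pos rfl, if_neg (by simpa using (hne (i - 1)).symm)]
      simp
    · rw [if_neg h1, if_neg h1, sub_zero]
      simp only [← sub_eq_iff_eq_add]
      split_ifs <;> simp
  simp only [vecMul, dotProduct, hD, mul_sub, mul_ite, mul_one, mul_zero, Finset.sum_sub_distrib,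
    Finset.sum_ite_eq, Finset.mem_univ, if_true]

theorem dplus_mulVec_geomVec {z : ℂ} (hz : z ^ m = 1) :
    (Algebra.ofId ℝ ℂ).mapMatrix (Dplus m) *ᵥ geomVec z = (z - 1) • geomVec z := by
  rw [dplus_mulVec hm]
  ext i
  simp only [Pi.smul_apply, smul_eq_mul, geomVec_add_one hz]
  ring

theorem transpose_dplus_mulVec_geomVec {z : ℂ} (hz : z ^ m = 1) :
    (Algebra.ofId ℝ ℂ).mapMatrix (Dplus m)ᵀ *ᵥ geomVec z = (z⁻¹ - 1) • geomVec z := by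
  rw [AlgHom.mapMatrix_apply, transpose_map, ← AlgHom.mapMatrix_apply, mulVec_transpose,
    vecMul_dplus hm]
  ext i
  simp only [Pi.smul_apply, smul_eq_mul, geomVec_sub_one hz]
  ring

theorem matAn_mulVec_geomVec (σ : ℝ) (n : ℕ) {z : ℂ} (hz : z ^ m = 1) :
    (Algebra.ofId ℝ ℂ).mapMatrix (MatAn m σ n) *ᵥ geomVec z =
      (1 + σ * ((z⁻¹ - 1) * (z - 1)) ^ n) • geomVec z := by
  have hG : (Algebra.ofId ℝ ℂ).mapMatrix ((Dplus m)ᵀ * Dplus m) *ᵥ geomVec z =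
      ((z⁻¹ - 1) * (z - 1)) • geomVec z := by
    rw [map_mul, ← mulVec_mulVec, dplus_mulVec_geomVec hm hz, mulVec_smul,
      transpose_dplus_mulVec_geomVec hm hz, smul_smul, mul_comm]
  rw [matAn_eq_one_add, map_add, map_one, map_smul, map_pow, add_mulVec, one_mulVec,
    smul_mulVec, pow_mulVec_of_mulVec_eq_smul hG, ← smul_assoc, Complex.real_smul, add_smul,
    one_smul]

end Fourier

open Complex in
theorem inv_sub_one_mul_sub_one_exp (x : ℝ) :
    ((exp (2 * x * I))⁻¹ - 1) * (exp (2 * x * I) - 1) = ((4 * Real.sin x ^ 2 : ℝ) : ℂ) := by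
  have h1 : ‖exp (2 * x * I)‖ = 1 := by simpa using norm_exp_ofReal_mul_I (2 * x)
  have h2 : ‖exp (2 * x * I) - 1‖ = ‖2 * Real.sin x‖ := by
    rw [mul_comm _ I, ← ofReal_ofNat, ← ofReal_mul, norm_exp_I_mul_ofReal_sub_one]
    ring_nf
  rw [inv_eq_conj h1, show starRingEnd ℂ (exp (2 * x * I)) - 1 = starRingEnd ℂ (exp (2 * x * I) - 1)
    by simp, mul_comm, mul_conj', h2, Real.norm_eq_abs, ← ofReal_pow, sq_abs]
  push_cast
  ring

noncomputable def fourierRoot (m : ℕ) : ℂ := Complex.exp (2 * Real.pi * Complex.I / m)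

noncomputable def smoothingEigenvalue (m : ℕ) (σ : ℝ) (n j : ℕ) : ℝ :=
  1 + 4 ^ n * σ * Real.sin (Real.pi * j / m) ^ (2 * n)

-- The `j`-th column is the Fourier mode `geomVec (fourierRoot m ^ j)`.
noncomputable def dftMatrix (m : ℕ) : Matrix (Fin m) (Fin m) ℂ :=
  (vandermonde fun j : Fin m => fourierRoot m ^ (j : ℕ))ᵀ

theorem inv_sub_one_mul_sub_one_fourierRoot_pow (m j : ℕ) :
    ((fourierRoot m ^ j)⁻¹ - 1) * (fourierRoot m ^ j - 1) =
      ((4 * Real.sin (Real.pi * j / m) ^ 2 : ℝ) : ℂ) := by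
  have h : fourierRoot m ^ j = Complex.exp (2 * ↑(Real.pi * j / m) * Complex.I) := by
    rw [fourierRoot, ← Complex.exp_nat_mul]
    congr 1
    push_cast
    field_simp
  rw [h, inv_sub_one_mul_sub_one_exp]

theorem one_le_smoothingEigenvalue {m : ℕ} {σ : ℝ} (hσ : 0 ≤ σ) (n j : ℕ) :
    1 ≤ smoothingEigenvalue m σ n j := by
  have : 0 ≤ 4 ^ n * σ * Real.sin (Real.pi * j / m) ^ (2 * n) := by
    rw [pow_mul]; positivity
  rw [smoothingEigenvalue]; linarith

section Spectrum

variable {m : ℕ} [NeZero m]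

theorem isPrimitiveRoot_fourierRoot : IsPrimitiveRoot (fourierRoot m) m :=
  Complex.isPrimitiveRoot_exp m (NeZero.ne m)

theorem isUnit_dftMatrix : IsUnit (dftMatrix m) := by
  rw [isUnit_iff_isUnit_det, dftMatrix, det_transpose, isUnit_iff_ne_zero,
    det_vandermonde_ne_zero_iff]
  intro i j h
  exact Fin.ext (isPrimitiveRoot_fourierRoot.pow_inj i.isLt j.isLt h)

variable (hm : 2 ≤ m)
include hm

theorem matAn_mulVec_fourierMode (σ : ℝ) (n j : ℕ) :
    (Algebra.ofId ℝ ℂ).mapMatrix (MatAn m σ n) *ᵥ geomVec (fourierRoot m ^ j) =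
      (smoothingEigenvalue m σ n j : ℂ) • geomVec (fourierRoot m ^ j) := by
  have hz : (fourierRoot m ^ j) ^ m = 1 := by
    rw [← pow_mul, mul_comm, pow_mul, isPrimitiveRoot_fourierRoot.pow_eq_one, one_pow]
  rw [matAn_mulVec_geomVec hm σ n hz, inv_sub_one_mul_sub_one_fourierRoot_pow, smoothingEigenvalue]
  push_cast
  rw [mul_pow, ← pow_mul]
  ring_nf

theorem matAn_mul_dftMatrix (σ : ℝ) (n : ℕ) :
    (Algebra.ofId ℝ ℂ).mapMatrix (MatAn m σ n) * dftMatrix m =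
      dftMatrix m * diagonal fun j : Fin m => (smoothingEigenvalue m σ n j : ℂ) := by
  ext k j
  rw [mul_diagonal, mul_comm]
  exact congrFun (matAn_mulVec_fourierMode hm σ n j) k

theorem trace_matAn_inv_mul_inv {σ : ℝ} (hσ : 0 ≤ σ) (n : ℕ) :
    ((MatAn m σ n)⁻¹ * (MatAn m σ n)⁻¹).trace =
      ∑ j ∈ Finset.range m, 1 / smoothingEigenvalue m σ n j ^ 2 := by
  have hpos : ∀ j : Fin m, (smoothingEigenvalue m σ n j : ℂ) ≠ 0 := fun j =>
    Complex.ofReal_ne_zero.mpr (zero_lt_one.trans_le (one_le_smoothingEigenvalue hσ n j)).ne'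
  have h := trace_inv_mul_inv_of_mul_eq_mul_diagonal isUnit_dftMatrix hpos
    (matAn_mul_dftMatrix hm σ n)
  apply Complex.ofReal_injective
  have htr : ∀ X : Matrix (Fin m) (Fin m) ℝ,
      (X.trace : ℂ) = ((Algebra.ofId ℝ ℂ).mapMatrix X).trace := fun X => by
    simp [trace]
  have hinv : (Algebra.ofId ℝ ℂ).mapMatrix (MatAn m σ n)⁻¹ =
      ((Algebra.ofId ℝ ℂ).mapMatrix (MatAn m σ n))⁻¹ :=
    map_nonsing_inv (Algebra.ofId ℝ ℂ).toRingHom _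
  rw [htr, map_mul, hinv, h, ← Fin.sum_univ_eq_sum_range]
  push_cast
  simp

end Spectrum

/-- Variance reduction: if `Σ` is symmetric positive definite with condition number
`κ = λ_max(Σ)/λ_min(Σ)`, then
`trace((A_σ⁽ⁿ⁾)⁻¹ Σ (A_σ⁽ⁿ⁾)⁻¹) ≤ trace(Σ)·(1 - 1/κ + (1/(κm)) Σ_j (1 + 4ⁿσ sin²ⁿ(πj/m))⁻²)`. -/
theorem stmt3 (m n : ℕ) [NeZero m] (hn : 1 ≤ n) (hm : 2 * n + 1 ≤ m)
    (σ : ℝ) (hσ : 0 ≤ σ)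
    (S : Matrix (Fin m) (Fin m) ℝ) (hS : S.PosDef)
    (κ : ℝ) (hκ : κ = (⨆ i, hS.1.eigenvalues i) / (⨅ i, hS.1.eigenvalues i)) :
    ((MatAn m σ n)⁻¹ * S * (MatAn m σ n)⁻¹).trace ≤
      S.trace * (1 - 1 / κ + (1 / (κ * m)) * ∑ j ∈ Finset.range m,
        1 / (1 + 4 ^ n * σ * Real.sin (Real.pi * j / m) ^ (2 * n)) ^ 2) := by
  calc ((MatAn m σ n)⁻¹ * S * (MatAn m σ n)⁻¹).trace
        = ((MatAn m σ n)⁻¹ * (MatAn m σ n)⁻¹ * S).trace := trace_mul_cycle _ _ _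
    _ ≤ S.trace * (1 - 1 / κ + 1 / (κ * Fintype.card (Fin m)) *
          ((MatAn m σ n)⁻¹ * (MatAn m σ n)⁻¹).trace) :=
      hS.trace_mul_le_of_posSemidef_one_sub (one_sub_matAn_inv_mul_inv_posSemidef hσ n) hκ
    _ = _ := by
      rw [trace_matAn_inv_mul_inv (by omega) hσ, Fintype.card_fin]
      rfl
end

section
/- Let f : ℝ^m → ℝ be convex and differentiable with a global minimizer w* and f* = f(w*). Fix η > 0, σ ≥ 0, n ≥ 1 and K ≥ 1. On a probability space, let w^0, g^0, w^1, g^1, … be random vectors in ℝ^m such that w^{k+1} = w^k − η (A_σ^{(n)})^{-1} g^k for all k, and such that the conditional expectation of g^k given (w^0, g^0, …, g^{k−1}) equals ∇f(w^k); assume all relevant quantities are integrable. Let \bar{w}^K = (1/K) Σ_{k=0}^{K−1} w^k. Then E[f(\bar{w}^K)] − f* ≤ (1/(2ηK)) E[‖w^0 − w*‖²_{A_σ^{(n)}}] + (η/(2K)) Σ_{k=0}^{K−1} E[‖g^k‖²_{(A_σ^{(n)})^{-1}}]. -/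
open Matrix

open MeasureTheory

/-!
With `A = A_σ⁽ⁿ⁾`, one step of the iteration changes the `A`-energy of the error by
`‖w^{k+1} - w*‖²_A = ‖w^k - w*‖²_A - 2η⟪g^k, w^k - w*⟫ + η²‖g^k‖²_{A⁻¹}`.
Since `w^k` is measurable with respect to the history `σ(w^0, g^0, …, g^{k-1})`, it can be pulled
out of the conditional expectation, so `E⟪g^k, w^k - w*⟫ = E⟪∇f(w^k), w^k - w*⟫`, which is at least
`E f(w^k) - f*` by convexity. Summing the energy identity telescopes, and Jensen's inequality
passes from the iterates to their average. The energy identity holds for any symmetric positive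
definite `A`; here `A = I + σ (D₊ᵀD₊)ⁿ`.
-/

open Finset
open scoped RealInnerProductSpace

section SmoothingMatrix

variable {m : ℕ} [NeZero m]

theorem neg_lap_eq : -Lap m = (Dplus m)ᵀ * Dplus m := by
  simp [Lap, Dminus]

theorem matAn_eq_one_add_smul_pow (σ : ℝ) (n : ℕ) : MatAn m σ n = 1 + σ • (-Lap m) ^ n := by
  rw [MatAn, ← neg_one_smul ℝ (Lap m), smul_pow, smul_smul, mul_comm]

theorem posDef_matAn {σ : ℝ} (hσ : 0 ≤ σ) (n : ℕ) : (MatAn m σ n).PosDef := by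
  rw [matAn_eq_one_add_smul_pow, neg_lap_eq]
  have hDD : ((Dplus m)ᵀ * Dplus m).PosSemidef := by
    simpa using Matrix.posSemidef_conjTranspose_mul_self (Dplus m)
  exact .add_posSemidef .one ((hDD.pow n).smul hσ)

end SmoothingMatrix

theorem Matrix.toEuclideanLin_apply_toEuclideanLin_inv {ι : Type*} [Fintype ι] [DecidableEq ι]
    {A : Matrix ι ι ℝ} (hA : IsUnit A) (x : EuclideanSpace ℝ ι) :
    toEuclideanLin A (toEuclideanLin A⁻¹ x) = x := by
  simp [toLpLin_apply, mulVec_mulVec, mul_nonsing_inv _ ((isUnit_iff_isUnit_det A).1 hA)]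


section Convex

variable {E : Type*} [NormedAddCommGroup E] [NormedSpace ℝ E]

theorem ConvexOn.add_fderiv_sub_le {s : Set E} {f : E → ℝ} {f' : E →L[ℝ] ℝ} {x y : E}
    (hf : ConvexOn ℝ s f) (hx : x ∈ s) (hy : y ∈ s) (hf' : HasFDerivAt f f' x) :
    f x + f' (y - x) ≤ f y := by
  set φ : ℝ → ℝ := f ∘ AffineMap.lineMap x y
  have hφ : ConvexOn ℝ (AffineMap.lineMap x y ⁻¹' s) φ := hf.comp_affineMap _
  have hline : HasDerivAt (fun t : ℝ => AffineMap.lineMap x y t) (y - x) 0 := by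
    simpa [AffineMap.lineMap_apply_module'] using
      ((hasDerivAt_id (0 : ℝ)).smul_const (y - x)).add_const x
  have hφ' : HasDerivAt φ (f' (y - x)) 0 := by
    refine HasFDerivAt.comp_hasDerivAt (f := fun t : ℝ => AffineMap.lineMap x y t) 0 ?_ hline
    simpa using hf'
  have := hφ.le_slope_of_hasDerivAt (by simpa using hx) (by simpa using hy) one_pos hφ'
  simp only [φ, slope_def_field, Function.comp_apply, AffineMap.lineMap_apply_zero,
    AffineMap.lineMap_apply_one, sub_zero, div_one] at this
  linarith

theorem ConvexOn.map_inv_card_smul_sum_le {ι : Type*} {s : Set E} {f : E → ℝ}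
    (hf : ConvexOn ℝ s f) {t : Finset ι} (ht : t.Nonempty) {x : ι → E} (hx : ∀ i ∈ t, x i ∈ s) :
    f ((#t : ℝ)⁻¹ • ∑ i ∈ t, x i) ≤ (#t : ℝ)⁻¹ * ∑ i ∈ t, f (x i) := by
  have hcard : (0 : ℝ) < #t := by exact_mod_cast ht.card_pos
  simpa [Finset.smul_sum, Finset.mul_sum] using
    hf.map_sum_le (t := t) (w := fun _ => (#t : ℝ)⁻¹) (p := x) (fun _ _ => by positivity)
      (by simp [hcard.ne']) hx

end Convex

section InnerProduct

variable {E : Type*} [NormedAddCommGroup E] [InnerProductSpace ℝ E]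

theorem ConvexOn.add_inner_sub_le [CompleteSpace E] {f : E → ℝ} {s : Set E} {x y g : E}
    (hf : ConvexOn ℝ s f) (hx : x ∈ s) (hy : y ∈ s) (hg : HasGradientAt f g x) :
    f x + ⟪g, y - x⟫ ≤ f y :=
  hf.add_fderiv_sub_le hx hy hg.hasFDerivAt

theorem LinearMap.IsSymmetric.inner_sub_smul_apply_sub_smul {T S : E →ₗ[ℝ] E}
    (hT : T.IsSymmetric) (hTS : ∀ x, T (S x) = x) (η : ℝ) (v g : E) :
    ⟪v - η • S g, T (v - η • S g)⟫ = ⟪v, T v⟫ - 2 * η * ⟪g, v⟫ + η ^ 2 * ⟪g, S g⟫ := by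
  have hcross : ⟪S g, T v⟫ = ⟪g, v⟫ := by rw [← hT, hTS]
  simp only [map_sub, map_smul, hTS, inner_sub_left, inner_sub_right, real_inner_smul_left,
    real_inner_smul_right, hcross, real_inner_comm g v, real_inner_comm g (S g)]
  ring

end InnerProduct

theorem sum_range_le_of_eq_sub_add {a b c : ℕ → ℝ} {η : ℝ} (hη : 0 < η)
    (hrec : ∀ k, a (k + 1) = a k - 2 * η * c k + η ^ 2 * b k) {K : ℕ} (haK : 0 ≤ a K) :
    ∑ k ∈ range K, c k ≤ a 0 / (2 * η) + η / 2 * ∑ k ∈ range K, b k := by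
  have htel : ∀ K, 2 * η * ∑ k ∈ range K, c k + a K = a 0 + η ^ 2 * ∑ k ∈ range K, b k := by
    intro K
    induction K with
    | zero => simp
    | succ K ih => rw [sum_range_succ, sum_range_succ, hrec]; linear_combination ih
  rw [div_add' _ _ _ (by positivity), le_div_iff₀ (by positivity)]
  nlinarith [htel K]

section Stochastic

variable {Ω E : Type*} {mΩ : MeasurableSpace Ω} {μ : Measure Ω}
  [NormedAddCommGroup E] [InnerProductSpace ℝ E]

theorem ConvexOn.integral_map_inv_card_smul_sum_le {ι : Type*} {f : E → ℝ}
    (hf : ConvexOn ℝ Set.univ f) {t : Finset ι} (ht : t.Nonempty) {x : ι → Ω → E}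
    (hfx : ∀ i, Integrable (fun ω => f (x i ω)) μ)
    (hfavg : Integrable (fun ω => f ((#t : ℝ)⁻¹ • ∑ i ∈ t, x i ω)) μ) :
    ∫ ω, f ((#t : ℝ)⁻¹ • ∑ i ∈ t, x i ω) ∂μ ≤ (#t : ℝ)⁻¹ * ∑ i ∈ t, ∫ ω, f (x i ω) ∂μ := by
  rw [← integral_finsetSum _ fun i _ => hfx i, ← integral_const_mul]
  exact integral_mono hfavg ((integrable_finsetSum _ fun i _ => hfx i).const_mul _)
    fun ω => hf.map_inv_card_smul_sum_le ht fun i _ => Set.mem_univ (x i ω)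

theorem LinearMap.IsSymmetric.integral_inner_sub_smul_apply_sub_smul {T S : E →ₗ[ℝ] E}
    (hT : T.IsSymmetric) (hTS : ∀ x, T (S x) = x) (η : ℝ) {v G : Ω → E}
    (hv : Integrable (fun ω => ⟪v ω, T (v ω)⟫) μ) (hGv : Integrable (fun ω => ⟪G ω, v ω⟫) μ)
    (hG : Integrable (fun ω => ⟪G ω, S (G ω)⟫) μ) :
    ∫ ω, ⟪v ω - η • S (G ω), T (v ω - η • S (G ω))⟫ ∂μ
      = ∫ ω, ⟪v ω, T (v ω)⟫ ∂μ - 2 * η * ∫ ω, ⟪G ω, v ω⟫ ∂μ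
        + η ^ 2 * ∫ ω, ⟪G ω, S (G ω)⟫ ∂μ := by
  simp_rw [hT.inner_sub_smul_apply_sub_smul hTS]
  have hGv' : Integrable (fun ω => 2 * η * ⟪G ω, v ω⟫) μ := hGv.const_mul _
  rw [integral_add (by exact hv.sub hGv') (hG.const_mul _), integral_sub hv hGv',
    integral_const_mul, integral_const_mul]

variable [CompleteSpace E]

theorem ConvexOn.integral_sub_le_integral_inner_of_condExp [IsProbabilityMeasure μ]
    {f : E → ℝ} {gradf : E → E} (hf : ConvexOn ℝ Set.univ f)
    (hgrad : ∀ x, HasGradientAt f (gradf x) x) {𝔉 : MeasurableSpace Ω} (h𝔉 : 𝔉 ≤ mΩ)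
    {x G : Ω → E} (hx : StronglyMeasurable[𝔉] x) (hG : Integrable G μ)
    (hcond : μ[G|𝔉] =ᵐ[μ] fun ω => gradf (x ω)) (hfx : Integrable (fun ω => f (x ω)) μ)
    (y : E) (hGx : Integrable (fun ω => ⟪G ω, x ω - y⟫) μ) :
    (∫ ω, f (x ω) ∂μ) - f y ≤ ∫ ω, ⟪G ω, x ω - y⟫ ∂μ := by
  have hpull : μ[fun ω => ⟪G ω, x ω - y⟫|𝔉] =ᵐ[μ] fun ω => ⟪gradf (x ω), x ω - y⟫ := by
    filter_upwards [condExp_bilin_of_stronglyMeasurable_right (innerSL ℝ)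
      (hx.sub stronglyMeasurable_const) hGx hG, hcond] with ω hbilin hω
    rw [← hω]
    exact hbilin
  have hgradx : Integrable (fun ω => ⟪gradf (x ω), x ω - y⟫) μ := integrable_condExp.congr hpull
  have hfirst (ω : Ω) : f (x ω) - f y ≤ ⟪gradf (x ω), x ω - y⟫ := by
    have := hf.add_inner_sub_le (Set.mem_univ _) (Set.mem_univ y) (hgrad (x ω))
    rw [← neg_sub, inner_neg_right] at this
    linarith
  calc (∫ ω, f (x ω) ∂μ) - f y = ∫ ω, (f (x ω) - f y) ∂μ := by
        rw [integral_sub hfx (integrable_const _), integral_const, probReal_univ, one_smul]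
    _ ≤ ∫ ω, ⟪gradf (x ω), x ω - y⟫ ∂μ :=
        integral_mono (hfx.sub (integrable_const _)) hgradx hfirst
    _ = ∫ ω, (μ[fun ω => ⟪G ω, x ω - y⟫|𝔉]) ω ∂μ := integral_congr_ae hpull.symm
    _ = ∫ ω, ⟪G ω, x ω - y⟫ ∂μ := integral_condExp h𝔉

theorem ConvexOn.integral_map_average_sub_le_of_preconditioned_sgd [IsProbabilityMeasure μ]
    {f : E → ℝ} {gradf : E → E} (hf : ConvexOn ℝ Set.univ f)
    (hgrad : ∀ x, HasGradientAt f (gradf x) x) {T S : E →ₗ[ℝ] E} (hT : T.IsPositive)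
    (hTS : ∀ x, T (S x) = x) {η : ℝ} (hη : 0 < η) {K : ℕ} (hK : 0 < K) (wstar : E)
    {𝔉 : ℕ → MeasurableSpace Ω} (h𝔉 : ∀ k, 𝔉 k ≤ mΩ) {w g : ℕ → Ω → E}
    (hw : ∀ k, StronglyMeasurable[𝔉 k] (w k))
    (hcond : ∀ k, μ[g k|𝔉 k] =ᵐ[μ] fun ω => gradf (w k ω))
    (hrec : ∀ k ω, w (k + 1) ω = w k ω - η • S (g k ω))
    (hfw : ∀ k, Integrable (fun ω => f (w k ω)) μ)
    (hfavg : Integrable (fun ω => f ((K : ℝ)⁻¹ • ∑ k ∈ range K, w k ω)) μ)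
    (hg : ∀ k, Integrable (g k) μ)
    (hgSg : ∀ k, Integrable (fun ω => ⟪g k ω, S (g k ω)⟫) μ)
    (hwTw : ∀ k, Integrable (fun ω => ⟪w k ω - wstar, T (w k ω - wstar)⟫) μ)
    (hgw : ∀ k, Integrable (fun ω => ⟪g k ω, w k ω - wstar⟫) μ) :
    (∫ ω, f ((K : ℝ)⁻¹ • ∑ k ∈ range K, w k ω) ∂μ) - f wstar ≤
      1 / (2 * η * K) * ∫ ω, ⟪w 0 ω - wstar, T (w 0 ω - wstar)⟫ ∂μ
        + η / (2 * K) * ∑ k ∈ range K, ∫ ω, ⟪g k ω, S (g k ω)⟫ ∂μ := by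
  set a := fun k => ∫ ω, ⟪w k ω - wstar, T (w k ω - wstar)⟫ ∂μ
  set b := fun k => ∫ ω, ⟪g k ω, S (g k ω)⟫ ∂μ
  set c := fun k => ∫ ω, ⟪g k ω, w k ω - wstar⟫ ∂μ
  have hgap (k : ℕ) : (∫ ω, f (w k ω) ∂μ) - f wstar ≤ c k :=
    hf.integral_sub_le_integral_inner_of_condExp hgrad (h𝔉 k) (hw k) (hg k) (hcond k) (hfw k)
      wstar (hgw k)
  have hstep (k : ℕ) : a (k + 1) = a k - 2 * η * c k + η ^ 2 * b k := by
    simp only [a, hrec, sub_right_comm _ _ wstar]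
    exact hT.isSymmetric.integral_inner_sub_smul_apply_sub_smul hTS η (hwTw k) (hgw k) (hgSg k)
  have haK : 0 ≤ a K := integral_nonneg fun ω => hT.re_inner_nonneg_right (w K ω - wstar)
  have hjensen : ∫ ω, f ((K : ℝ)⁻¹ • ∑ k ∈ range K, w k ω) ∂μ
      ≤ (K : ℝ)⁻¹ * ∑ k ∈ range K, ∫ ω, f (w k ω) ∂μ := by
    simpa using hf.integral_map_inv_card_smul_sum_le (nonempty_range_iff.2 hK.ne') hfw
      (by simpa using hfavg)
  have hK' : (K : ℝ) ≠ 0 := by positivity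
  calc (∫ ω, f ((K : ℝ)⁻¹ • ∑ k ∈ range K, w k ω) ∂μ) - f wstar
      ≤ (K : ℝ)⁻¹ * ∑ k ∈ range K, ((∫ ω, f (w k ω) ∂μ) - f wstar) := by
        rw [sum_sub_distrib, sum_const, card_range, nsmul_eq_mul, mul_sub,
          inv_mul_cancel_left₀ hK']
        linarith
    _ ≤ (K : ℝ)⁻¹ * ∑ k ∈ range K, c k := by gcongr with k; exact hgap k
    _ ≤ (K : ℝ)⁻¹ * (a 0 / (2 * η) + η / 2 * ∑ k ∈ range K, b k) := by
        gcongr; exact sum_range_le_of_eq_sub_add hη hstep haK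
    _ = 1 / (2 * η * K) * a 0 + η / (2 * K) * ∑ k ∈ range K, b k := by
        field_simp

end Stochastic

section History

variable {Ω E : Type*} [MeasurableSpace E]

abbrev historySigma (x₀ : Ω → E) (g : ℕ → Ω → E) (k : ℕ) : MeasurableSpace Ω :=
  MeasurableSpace.comap x₀ inferInstance ⊔
    ⨆ j ∈ range k, MeasurableSpace.comap (g j) inferInstance

variable {x₀ : Ω → E} {g : ℕ → Ω → E}

theorem historySigma_le {mΩ : MeasurableSpace Ω} (hx₀ : Measurable x₀)
    (hg : ∀ j, Measurable (g j)) (k : ℕ) : historySigma x₀ g k ≤ mΩ :=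
  sup_le hx₀.comap_le (iSup₂_le fun j _ => (hg j).comap_le)

theorem historySigma_mono : Monotone (historySigma x₀ g) := fun _ _ hkl =>
  sup_le_sup_left (biSup_mono fun _ hj => mem_range.2 ((mem_range.1 hj).trans_le hkl)) _

theorem measurable_historySigma (k : ℕ) : Measurable[historySigma x₀ g (k + 1)] (g k) :=
  (comap_measurable (g k)).mono
    (le_sup_right.trans' (le_iSup₂ (f := fun j (_ : j ∈ range (k + 1)) =>
      MeasurableSpace.comap (g j) inferInstance) k (self_mem_range_succ k))) le_rfl

theorem measurable_historySigma_of_eq_sub_smul [AddCommGroup E] [Module ℝ E] [MeasurableSub₂ E]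
    [MeasurableConstSMul ℝ E] {w : ℕ → Ω → E} {S : E → E} (hS : Measurable S) {η : ℝ}
    (hrec : ∀ k ω, w (k + 1) ω = w k ω - η • S (g k ω)) (k : ℕ) :
    Measurable[historySigma (w 0) g k] (w k) := by
  induction k with
  | zero => exact (comap_measurable (w 0)).mono le_sup_left le_rfl
  | succ k ih =>
    rw [show w (k + 1) = fun ω => w k ω - η • S (g k ω) from funext (hrec k)]
    exact (ih.mono (historySigma_mono k.le_succ) le_rfl).sub
      ((hS.comp (measurable_historySigma k)).const_smul η)

end History

theorem stmt6_general {Ω : Type} [MeasurableSpace Ω] (μ : Measure Ω) [IsProbabilityMeasure μ]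
    (m : ℕ) [NeZero m] (σ : ℝ) (hσ : 0 ≤ σ) (n : ℕ)
    (η : ℝ) (hη : 0 < η) (K : ℕ) (hK : 1 ≤ K)
    (f : EuclideanSpace ℝ (Fin m) → ℝ)
    (hconv : ConvexOn ℝ Set.univ f)
    (gradf : EuclideanSpace ℝ (Fin m) → EuclideanSpace ℝ (Fin m))
    (hgrad : ∀ x, HasGradientAt f (gradf x) x)
    (wstar : EuclideanSpace ℝ (Fin m))
    (w g : ℕ → Ω → EuclideanSpace ℝ (Fin m))
    (hrec : ∀ k ω, w (k + 1) ω
        = w k ω - η • Matrix.toEuclideanLin ((MatAn m σ n)⁻¹) (g k ω))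
    (hmeasw : ∀ k, Measurable (w k)) (hmeasg : ∀ k, Measurable (g k))
    -- the conditional expectation of `g^k` given `(w^0, g^0, …, g^{k-1})` is `∇f(w^k)`
    (hcond : ∀ k, μ[g k | MeasurableSpace.comap (w 0) inferInstance ⊔
          ⨆ j ∈ Finset.range k, MeasurableSpace.comap (g j) inferInstance]
        =ᵐ[μ] fun ω => gradf (w k ω))
    -- integrability of all relevant quantities
    (hint1 : ∀ k, Integrable (fun ω => f (w k ω)) μ)
    (hint2 : Integrable (fun ω => f ((K : ℝ)⁻¹ • ∑ k ∈ Finset.range K, w k ω)) μ)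
    (hint3 : ∀ k, Integrable (g k) μ)
    (hint4 : ∀ k, Integrable
        (fun ω => (inner ℝ (g k ω) (Matrix.toEuclideanLin ((MatAn m σ n)⁻¹) (g k ω)) : ℝ)) μ)
    (hint5 : ∀ k, Integrable
        (fun ω => (inner ℝ (w k ω - wstar)
          (Matrix.toEuclideanLin (MatAn m σ n) (w k ω - wstar)) : ℝ)) μ)
    (hint6 : ∀ k, Integrable (fun ω => (inner ℝ (g k ω) (w k ω - wstar) : ℝ)) μ) :
    (∫ ω, f ((K : ℝ)⁻¹ • ∑ k ∈ Finset.range K, w k ω) ∂μ) - f wstar ≤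
      (1 / (2 * η * K)) * ∫ ω, (inner ℝ (w 0 ω - wstar)
          (Matrix.toEuclideanLin (MatAn m σ n) (w 0 ω - wstar)) : ℝ) ∂μ
      + (η / (2 * K)) * ∑ k ∈ Finset.range K,
          ∫ ω, (inner ℝ (g k ω) (Matrix.toEuclideanLin ((MatAn m σ n)⁻¹) (g k ω)) : ℝ) ∂μ := by
  have hA : (MatAn m σ n).PosDef := posDef_matAn hσ n
  have hS : Measurable (Matrix.toEuclideanLin ((MatAn m σ n)⁻¹)) :=
    (LinearMap.continuous_of_finiteDimensional _).measurable
  exact hconv.integral_map_average_sub_le_of_preconditioned_sgd hgrad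
    (Matrix.isPositive_toEuclideanLin_iff.2 hA.posSemidef)
    (Matrix.toEuclideanLin_apply_toEuclideanLin_inv hA.isUnit) hη hK wstar
    (historySigma_le (hmeasw 0) hmeasg)
    (fun k => (measurable_historySigma_of_eq_sub_smul hS hrec k).stronglyMeasurable)
    hcond hrec hint1 hint2 hint3 hint4 hint5 hint6

/-- Optimality gap of LSSGD for convex `f`: if `w^{k+1} = w^k - η (A_σ⁽ⁿ⁾)⁻¹ g^k` with
`E[g^k | w^0, g^0, …, g^{k-1}] = ∇f(w^k)`, then for `w̄^K = (1/K) Σ_{k<K} w^k`,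
`E[f(w̄^K)] - f(w*) ≤ (1/(2ηK)) E‖w^0 - w*‖²_{A_σ⁽ⁿ⁾}
  + (η/(2K)) Σ_{k<K} E‖g^k‖²_{(A_σ⁽ⁿ⁾)⁻¹}`. -/
theorem stmt6 {Ω : Type} [MeasurableSpace Ω] (μ : Measure Ω) [IsProbabilityMeasure μ]
    (m : ℕ) [NeZero m] (σ : ℝ) (hσ : 0 ≤ σ) (n : ℕ) (hn : 1 ≤ n)
    (η : ℝ) (hη : 0 < η) (K : ℕ) (hK : 1 ≤ K)
    (f : EuclideanSpace ℝ (Fin m) → ℝ)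
    (hconv : ConvexOn ℝ Set.univ f)
    (gradf : EuclideanSpace ℝ (Fin m) → EuclideanSpace ℝ (Fin m))
    (hgrad : ∀ x, HasGradientAt f (gradf x) x)
    (wstar : EuclideanSpace ℝ (Fin m)) (hminzr : ∀ x, f wstar ≤ f x)
    (w g : ℕ → Ω → EuclideanSpace ℝ (Fin m))
    (hrec : ∀ k ω, w (k + 1) ω
        = w k ω - η • Matrix.toEuclideanLin ((MatAn m σ n)⁻¹) (g k ω))
    (hmeasw : ∀ k, Measurable (w k)) (hmeasg : ∀ k, Measurable (g k))
    -- the conditional expectation of `g^k` given `(w^0, g^0, …, g^{k-1})` is `∇f(w^k)`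
    (hcond : ∀ k, μ[g k | MeasurableSpace.comap (w 0) inferInstance ⊔
          ⨆ j ∈ Finset.range k, MeasurableSpace.comap (g j) inferInstance]
        =ᵐ[μ] fun ω => gradf (w k ω))
    -- integrability of all relevant quantities
    (hint1 : ∀ k, Integrable (fun ω => f (w k ω)) μ)
    (hint2 : Integrable (fun ω => f ((K : ℝ)⁻¹ • ∑ k ∈ Finset.range K, w k ω)) μ)
    (hint3 : ∀ k, Integrable (g k) μ)
    (hint4 : ∀ k, Integrable
        (fun ω => (inner ℝ (g k ω) (Matrix.toEuclideanLin ((MatAn m σ n)⁻¹) (g k ω)) : ℝ)) μ)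
    (hint5 : ∀ k, Integrable
        (fun ω => (inner ℝ (w k ω - wstar)
          (Matrix.toEuclideanLin (MatAn m σ n) (w k ω - wstar)) : ℝ)) μ)
    (hint6 : ∀ k, Integrable (fun ω => (inner ℝ (g k ω) (w k ω - wstar) : ℝ)) μ) :
    (∫ ω, f ((K : ℝ)⁻¹ • ∑ k ∈ Finset.range K, w k ω) ∂μ) - f wstar ≤
      (1 / (2 * η * K)) * ∫ ω, (inner ℝ (w 0 ω - wstar)
          (Matrix.toEuclideanLin (MatAn m σ n) (w 0 ω - wstar)) : ℝ) ∂μ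
      + (η / (2 * K)) * ∑ k ∈ Finset.range K,
          ∫ ω, (inner ℝ (g k ω) (Matrix.toEuclideanLin ((MatAn m σ n)⁻¹) (g k ω)) : ℝ) ∂μ :=
  stmt6_general μ m σ hσ n η hη K hK f hconv gradf hgrad wstar w g hrec hmeasw hmeasg hcond hint1
    hint2 hint3 hint4 hint5 hint6
end

section
/- Let m ≥ 1, σ ≥ 0, g ∈ ℝ^m and d = A_σ^{-1} g. Then for any p ∈ ℕ, ‖D₊^p d‖₁ ≤ ‖D₊^p g‖₁, where ‖·‖₁ is the ℓ₁ norm on ℝ^m. -/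
open Matrix

/-!
`A_σ = 1 + σ D₊ᵀ D₊` does not shrink the ℓ¹ norm: with `s = sign v`,
`‖A_σ v‖₁ ≥ ⟪s, A_σ v⟫ = ‖v‖₁ + σ ⟪D₊ s, D₊ v⟫`, and every term
`(s_{i+1} - s_i)(v_{i+1} - v_i)` of the last inner product is nonnegative because the sign is
monotone. In particular `A_σ` is invertible, and since it commutes with `D₊ᵖ`,
`D₊ᵖ g = A_σ (D₊ᵖ d)` has ℓ¹ norm at least that of `D₊ᵖ d`.
-/

section Sign

variable {α : Type*} [Ring α] [LinearOrder α] [IsStrictOrderedRing α]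

lemma SignType.cast_mono : Monotone (fun s : SignType => (s : α)) := by
  intro s t hst
  cases s <;> cases t <;> first | exact absurd hst (by decide) | norm_num

lemma monotone_sign_cast : Monotone fun x : α => (SignType.sign x : α) :=
  SignType.cast_mono.comp SignType.sign.monotone

lemma sign_mul_le_abs (x y : α) : (SignType.sign x : α) * y ≤ |y| := by
  cases SignType.sign x <;> simp [neg_le_abs, le_abs_self]

end Sign

section L1Expansion

variable {k n : Type*} [Fintype k] [Fintype n] [DecidableEq n]

lemma sum_abs_le_sum_abs_one_add_smul_transpose_mul_mulVec (D : Matrix k n ℝ)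
    (hD : ∀ v : n → ℝ, 0 ≤ (D *ᵥ fun i => (SignType.sign (v i) : ℝ)) ⬝ᵥ (D *ᵥ v))
    {σ : ℝ} (hσ : 0 ≤ σ) (v : n → ℝ) :
    ∑ i, |v i| ≤ ∑ i, |((1 + σ • (Dᵀ * D)) *ᵥ v) i| := by
  set s : n → ℝ := fun i => SignType.sign (v i)
  calc ∑ i, |v i| = s ⬝ᵥ v := by simp only [dotProduct, s, sign_mul_self]
    _ ≤ s ⬝ᵥ v + σ * ((D *ᵥ s) ⬝ᵥ (D *ᵥ v)) := le_add_of_nonneg_right (mul_nonneg hσ (hD v))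
    _ = s ⬝ᵥ ((1 + σ • (Dᵀ * D)) *ᵥ v) := by
      rw [add_mulVec, one_mulVec, dotProduct_add, smul_mulVec, dotProduct_smul, ← mulVec_mulVec,
        dotProduct_mulVec s Dᵀ, vecMul_transpose, smul_eq_mul]
    _ ≤ ∑ i, |((1 + σ • (Dᵀ * D)) *ᵥ v) i| :=
      Finset.sum_le_sum fun i _ => sign_mul_le_abs _ _

end L1Expansion

lemma Dplus_mulVec_apply {m : ℕ} [NeZero m] (hm : 1 < m) (x : Fin m → ℝ) (i : Fin m) :
    (Dplus m *ᵥ x) i = x (i + 1) - x i := by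
  have hne : i + 1 ≠ i := by
    simp [Fin.ext_iff, Nat.mod_eq_of_lt hm]
  simp [Dplus, mulVec, dotProduct, ite_mul, Finset.sum_ite, Finset.filter_eq', Finset.filter_ne',
    hne, neg_add_eq_sub]

-- In `Fin 1` we have `i + 1 = i`, so the first branch of `Dplus` wins and `D₊ = -1`, not `0`.
lemma Dplus_one : Dplus 1 = -1 := by
  ext i j
  simp [Dplus, Subsingleton.elim i j]

lemma Dplus_mulVec_sign_dotProduct_nonneg (m : ℕ) [NeZero m] (v : Fin m → ℝ) :
    0 ≤ (Dplus m *ᵥ fun i => (SignType.sign (v i) : ℝ)) ⬝ᵥ (Dplus m *ᵥ v) := by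
  obtain rfl | hm : m = 1 ∨ 1 < m := by have := NeZero.ne m; omega
  · simp [Dplus_one, dotProduct, neg_mulVec, sign_mul_self]
  · simp only [dotProduct, Dplus_mulVec_apply hm]
    exact Finset.sum_nonneg fun i _ =>
      (monovary_id_iff.2 monotone_sign_cast).sub_mul_sub_nonneg (v i) (v (i + 1))

lemma MatA_eq_one_add_smul_transpose_mul (m : ℕ) [NeZero m] (σ : ℝ) :
    MatA m σ = 1 + σ • ((Dplus m)ᵀ * Dplus m) := by
  simp [MatA, Lap, Dminus, sub_eq_add_neg]

lemma sum_abs_le_sum_abs_MatA_mulVec (m : ℕ) [NeZero m] {σ : ℝ} (hσ : 0 ≤ σ) (v : Fin m → ℝ) :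
    ∑ i, |v i| ≤ ∑ i, |(MatA m σ *ᵥ v) i| := by
  rw [MatA_eq_one_add_smul_transpose_mul]
  exact sum_abs_le_sum_abs_one_add_smul_transpose_mul_mulVec _
    (Dplus_mulVec_sign_dotProduct_nonneg m) hσ v

lemma isUnit_MatA (m : ℕ) [NeZero m] {σ : ℝ} (hσ : 0 ≤ σ) : IsUnit (MatA m σ) := by
  refine mulVec_injective_iff_isUnit.1 fun x y hxy => ?_
  have h := sum_abs_le_sum_abs_MatA_mulVec m hσ (x - y)
  rw [mulVec_sub, hxy, sub_self] at h
  ext i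
  have hi : |(x - y) i| ≤ 0 :=
    (Finset.single_le_sum (fun j _ => abs_nonneg ((x - y) j)) (Finset.mem_univ i)).trans
      (by simpa using h)
  simpa [sub_eq_zero] using hi

lemma Dplus_eq_circulant (m : ℕ) [NeZero m] :
    Dplus m = circulant (fun k : Fin m => if k = 0 then -1 else if k = -1 then 1 else 0) := by
  ext i j
  have h1 : (j = i) ↔ (i - j = 0) := by rw [sub_eq_zero, eq_comm]
  have h2 : (j = i + 1) ↔ (i - j = -1) := by
    rw [sub_eq_iff_eq_add, neg_add_eq_sub, eq_sub_iff_add_eq, eq_comm]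
  simp only [Dplus, of_apply, circulant_apply, h1, h2]

lemma commute_Dplus_MatA (m : ℕ) [NeZero m] (σ : ℝ) : Commute (Dplus m) (MatA m σ) := by
  have hD : Commute (Dplus m) (Dplus m)ᵀ := by
    rw [Dplus_eq_circulant, transpose_circulant]
    exact circulant_mul_comm _ _
  rw [MatA_eq_one_add_smul_transpose_mul]
  exact (Commute.one_right _).add_right ((hD.mul_right (Commute.refl _)).smul_right σ)

/-- If `d = A_σ⁻¹ g` then `‖D₊ᵖ d‖₁ ≤ ‖D₊ᵖ g‖₁` for every `p ∈ ℕ`. -/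
theorem stmt9 (m : ℕ) [NeZero m] (σ : ℝ) (hσ : 0 ≤ σ)
    (g d : Fin m → ℝ) (hd : d = (MatA m σ)⁻¹ *ᵥ g) (p : ℕ) :
    ∑ i, |((Dplus m ^ p) *ᵥ d) i| ≤ ∑ i, |((Dplus m ^ p) *ᵥ g) i| := by
  have hg : g = MatA m σ *ᵥ d := by
    rw [hd, mulVec_mulVec, mul_nonsing_inv _ ((isUnit_iff_isUnit_det _).1 (isUnit_MatA m hσ)),
      one_mulVec]
  calc ∑ i, |((Dplus m ^ p) *ᵥ d) i|
      ≤ ∑ i, |(MatA m σ *ᵥ ((Dplus m ^ p) *ᵥ d)) i| := sum_abs_le_sum_abs_MatA_mulVec m hσ _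
    _ = ∑ i, |((Dplus m ^ p) *ᵥ g) i| := by
      rw [hg, mulVec_mulVec, mulVec_mulVec, ((commute_Dplus_MatA m σ).pow_left p).eq]
end

section
/- Let f : ℝ^m → ℝ be differentiable with L-Lipschitz continuous gradient, let σ ≥ 0, n ≥ 1, η > 0, and let w⁺ = w − η(A_σ^{(n)})^{-1}∇f(w). Then f(w⁺) ≤ f(w) − η(1 − ηL/2)·‖∇f(w)‖²_{(A_σ^{(n)})^{-1}}, where ‖g‖²_{(A_σ^{(n)})^{-1}} = ⟨g, (A_σ^{(n)})^{-1}g⟩. -/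
/-!
On the segment from `x` to `y`, the Lipschitz bound on `∇f` makes
`t ↦ f (x + t (y - x)) - t ⟪∇f x, y - x⟫ - L t²/2 ‖y - x‖²` antitone, which gives the
descent inequality `f y ≤ f x + ⟪∇f x, y - x⟫ + L/2 ‖y - x‖²`. Since `A := A_σ⁽ⁿ⁾` equals
`I + σ (D₊ᵀ D₊)ⁿ`, it dominates the identity, so the step `d = A⁻¹ ∇f(w)` satisfies
`‖d‖² ≤ ⟪A d, d⟫ = ⟪∇f(w), d⟫`; putting `y = w - η d` into the descent inequality and bounding
`‖d‖²` this way gives the claim.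
-/

open Matrix

open Set

theorem nonneg_of_norm_sub_le_mul_norm_sub {E F : Type*} [NormedAddCommGroup E] [Nontrivial E]
    [SeminormedAddCommGroup F] {g : E → F} {L : ℝ} (h : ∀ x y, ‖g x - g y‖ ≤ L * ‖x - y‖) :
    0 ≤ L := by
  obtain ⟨x, hx⟩ := exists_ne (0 : E)
  have hLx : 0 ≤ L * ‖x‖ := by simpa using (norm_nonneg _).trans (h x 0)
  exact nonneg_of_mul_nonneg_left hLx (norm_pos_iff.2 hx)

theorem le_add_inner_add_of_lipschitz_gradient {E : Type*} [NormedAddCommGroup E]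
    [InnerProductSpace ℝ E] [CompleteSpace E] {f : E → ℝ} {f' : E → E}
    (hf : ∀ x, HasGradientAt f (f' x) x) {L : ℝ} (hL : ∀ x y, ‖f' x - f' y‖ ≤ L * ‖x - y‖)
    (x y : E) : f y ≤ f x + inner ℝ (f' x) (y - x) + L / 2 * ‖y - x‖ ^ 2 := by
  set v := y - x
  let φ : ℝ → ℝ := fun t => f (x + t • v) - t * inner ℝ (f' x) v - L / 2 * t ^ 2 * ‖v‖ ^ 2
  have hφ : ∀ t, HasDerivAt φ (inner ℝ (f' (x + t • v) - f' x) v - L * t * ‖v‖ ^ 2) t := by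
    intro t
    have hline : HasDerivAt (fun t : ℝ => x + t • v) v t := by
      simpa using ((hasDerivAt_id t).smul_const v).const_add x
    refine ((((hf _).hasFDerivAt.comp_hasDerivAt t hline).sub
      ((hasDerivAt_id t).mul_const (inner ℝ (f' x) v))).sub
      (((hasDerivAt_pow 2 t).const_mul (L / 2)).mul_const (‖v‖ ^ 2))).congr_deriv ?_
    simp only [inner_sub_left, InnerProductSpace.toDual_apply_apply]
    ring
  have hφ_nonpos : ∀ t ∈ interior (Icc (0 : ℝ) 1), deriv φ t ≤ 0 := by
    intro t ht
    rw [interior_Icc] at ht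
    rw [(hφ t).deriv, sub_nonpos]
    calc inner ℝ (f' (x + t • v) - f' x) v ≤ ‖f' (x + t • v) - f' x‖ * ‖v‖ :=
          real_inner_le_norm _ _
      _ ≤ L * (t * ‖v‖) * ‖v‖ := by
          gcongr
          simpa [norm_smul, abs_of_pos ht.1] using hL (x + t • v) x
      _ = L * t * ‖v‖ ^ 2 := by ring
  have hφ01 := antitoneOn_of_deriv_nonpos (convex_Icc 0 1)
    (fun t _ => (hφ t).continuousAt.continuousWithinAt)
    (fun t _ => (hφ t).differentiableAt.differentiableWithinAt) hφ_nonpos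
    (left_mem_Icc.2 zero_le_one) (right_mem_Icc.2 zero_le_one) zero_le_one
  simp only [φ, v, one_smul, add_sub_cancel, zero_smul, add_zero] at hφ01
  linarith

theorem LinearMap.norm_sq_le_inner_of_one_le {E : Type*} [NormedAddCommGroup E]
    [InnerProductSpace ℝ E] {T : E →ₗ[ℝ] E} (hT : 1 ≤ T) (x : E) :
    ‖x‖ ^ 2 ≤ inner ℝ x (T x) := by
  have := ((LinearMap.le_def _ _).1 hT).inner_nonneg_right x
  rwa [LinearMap.sub_apply, inner_sub_right, Module.End.one_apply, real_inner_self_eq_norm_sq,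
    sub_nonneg] at this

theorem Matrix.norm_sq_toEuclideanLin_inv_le_inner {ι : Type*} [Fintype ι] [DecidableEq ι]
    {A : Matrix ι ι ℝ} (hA : (A - 1).PosSemidef) (g : EuclideanSpace ℝ ι) :
    ‖toEuclideanLin A⁻¹ g‖ ^ 2 ≤ inner ℝ g (toEuclideanLin A⁻¹ g) := by
  have hunit : IsUnit A.det := (isUnit_iff_isUnit_det A).1 <| by
    simpa using (PosDef.one.add_posSemidef hA).isUnit
  have hone : 1 ≤ toEuclideanLin A := by
    have : toEuclideanLin A - 1 = toEuclideanLin (A - 1) := by rw [map_sub, toLpLin_one]; rfl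
    rw [LinearMap.le_def, this, isPositive_toEuclideanLin_iff]
    exact hA
  have hg : toEuclideanLin A (toEuclideanLin A⁻¹ g) = g := by
    rw [← LinearMap.comp_apply, ← toLpLin_mul_same, mul_nonsing_inv _ hunit, toLpLin_one,
      LinearMap.id_apply]
  have := LinearMap.norm_sq_le_inner_of_one_le hone (toEuclideanLin A⁻¹ g)
  rwa [hg, real_inner_comm] at this

theorem posSemidef_MatAn_sub_one (m : ℕ) [NeZero m] {σ : ℝ} (hσ : 0 ≤ σ) (n : ℕ) :
    (MatAn m σ n - 1).PosSemidef := by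
  have hLap : Lap m = -((Dplus m)ᴴ * Dplus m) := by
    rw [Lap, Dminus, conjTranspose_eq_transpose_of_trivial, neg_mul]
  have : MatAn m σ n - 1 = σ • ((Dplus m)ᴴ * Dplus m) ^ n := by
    rw [MatAn, add_sub_cancel_left, hLap, mul_comm, mul_smul, ← smul_pow, neg_one_smul, neg_neg]
  rw [this]
  exact ((posSemidef_conjTranspose_mul_self _).pow n).smul hσ

theorem stmt17_general (m : ℕ) [NeZero m] (σ : ℝ) (hσ : 0 ≤ σ) (n : ℕ)
    (f : EuclideanSpace ℝ (Fin m) → ℝ)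
    (gradf : EuclideanSpace ℝ (Fin m) → EuclideanSpace ℝ (Fin m))
    (hgrad : ∀ x, HasGradientAt f (gradf x) x)
    (L : ℝ) (hlip : ∀ x y, ‖gradf x - gradf y‖ ≤ L * ‖x - y‖)
    (η : ℝ)
    (w wplus : EuclideanSpace ℝ (Fin m))
    (hw : wplus = w - η • Matrix.toEuclideanLin ((MatAn m σ n)⁻¹) (gradf w)) :
    f wplus ≤ f w - η * (1 - η * L / 2) *
      (inner ℝ (gradf w) (Matrix.toEuclideanLin ((MatAn m σ n)⁻¹) (gradf w)) : ℝ) := by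
  set g := gradf w
  set d := toEuclideanLin (MatAn m σ n)⁻¹ g
  have hL : 0 ≤ L := nonneg_of_norm_sub_le_mul_norm_sub hlip
  have hd : ‖d‖ ^ 2 ≤ inner ℝ g d :=
    norm_sq_toEuclideanLin_inv_le_inner (posSemidef_MatAn_sub_one m hσ n) g
  have hdesc := le_add_inner_add_of_lipschitz_gradient hgrad hlip w wplus
  rw [hw, sub_sub_cancel_left, inner_neg_right, real_inner_smul_right, norm_neg, norm_smul,
    mul_pow, Real.norm_eq_abs, sq_abs] at hdesc
  rw [hw]
  calc _ ≤ f w + -(η * inner ℝ g d) + L / 2 * (η ^ 2 * ‖d‖ ^ 2) := hdesc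
    _ ≤ f w + -(η * inner ℝ g d) + L / 2 * (η ^ 2 * inner ℝ g d) := by gcongr
    _ = f w - η * (1 - η * L / 2) * inner ℝ g d := by ring

/-- Descent property of one LSGD step: if `∇f` is `L`-Lipschitz and
`w⁺ = w - η (A_σ⁽ⁿ⁾)⁻¹ ∇f(w)`, then
`f(w⁺) ≤ f(w) - η(1 - ηL/2) ‖∇f(w)‖²_{(A_σ⁽ⁿ⁾)⁻¹}`, where
`‖g‖²_{(A_σ⁽ⁿ⁾)⁻¹} = ⟨g, (A_σ⁽ⁿ⁾)⁻¹ g⟩`. -/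
theorem stmt17 (m : ℕ) [NeZero m] (σ : ℝ) (hσ : 0 ≤ σ) (n : ℕ) (hn : 1 ≤ n)
    (f : EuclideanSpace ℝ (Fin m) → ℝ)
    (gradf : EuclideanSpace ℝ (Fin m) → EuclideanSpace ℝ (Fin m))
    (hgrad : ∀ x, HasGradientAt f (gradf x) x)
    (L : ℝ) (hlip : ∀ x y, ‖gradf x - gradf y‖ ≤ L * ‖x - y‖)
    (η : ℝ) (hη : 0 < η)
    (w wplus : EuclideanSpace ℝ (Fin m))
    (hw : wplus = w - η • Matrix.toEuclideanLin ((MatAn m σ n)⁻¹) (gradf w)) :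
    f wplus ≤ f w - η * (1 - η * L / 2) *
      (inner ℝ (gradf w) (Matrix.toEuclideanLin ((MatAn m σ n)⁻¹) (gradf w)) : ℝ) :=
  stmt17_general m σ hσ n f gradf hgrad L hlip η w wplus hw
end
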